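/- arXiv:2101.11693 — 2 statements merged into one kernel-verified Lean document; each statement's English description precedes it below -/
import Mathlib

section
/- Let ε ∈ (0,1), δ ∈ (0,1), Δ > 0, and let a, a' ∈ ℝ satisfy |a − a'| ≤ Δ. Set σ² = 2·ln(1.25/δ)·Δ²/ε². Then the Gaussian measures gaussianReal a σ² and gaussianReal a' σ² are (ε, δ)-indistinguishable, i.e., for every measurable set S ⊆ ℝ, (gaussianReal a σ²)(S) ≤ exp(ε)·(gaussianReal a' σ²)(S) + δ. (This is the one-dimensional Gaussian mechanism: releasing f(D) + N(0, σ²) for a function f with sensitivity Δ is (ε, δ)-differentially private.) -/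
/-!
The privacy loss `log (p_a x / p_a' x)` of two Gaussian densities with common variance `σ²` is
affine in `x`. So, for `a' ≤ a`, the set where `p_a > e^ε p_a'` lies in the tail beyond
`a + t` with `t = εσ²/Δ - Δ/2`, and `N(a, σ²)(S) ≤ e^ε N(a', σ²)(S) + N(a, σ²)(a + t, ∞)`.
With `L = log (1.25/δ)` the choice of `σ²` gives `t = (4L - ε)Δ/(2ε)` and
`t² / (2σ²) ≥ L - 1/2`; comparing densities with the Gaussian centred at `a + t` bounds the tail
by `e^{-t²/(2σ²)} / 2 ≤ e^{1/2 - L} / 2 ≤ 1.25 e^{-L} = δ`. When `t < 0`, then `L < 1/4`, so `δ > 15/16`, and bounding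
the density by its maximum suffices. The case `a < a'` follows by reflecting `x ↦ -x`.
-/

open MeasureTheory ProbabilityTheory Set Real
open scoped NNReal ENNReal

theorem withDensity_le_mul_withDensity_add {α : Type*} [MeasurableSpace α] (ρ : Measure α)
    [SFinite ρ] {f g : α → ℝ≥0∞} (hg : Measurable g) (c : ℝ≥0∞) (S : Set α) :
    ρ.withDensity f S ≤ c * ρ.withDensity g S + ρ.withDensity f {x | c * g x < f x} := by
  set B := {x | c * g x < f x}
  have hgood : ρ.withDensity f (S \ B) ≤ c * ρ.withDensity g S := by
    simp only [withDensity_apply' _ (S \ B), withDensity_apply' _ S]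
    calc ∫⁻ x in S \ B, f x ∂ρ ≤ ∫⁻ x in S \ B, c * g x ∂ρ :=
          setLIntegral_mono (hg.const_mul c) fun x hx ↦ not_lt.mp hx.2
      _ = c * ∫⁻ x in S \ B, g x ∂ρ := lintegral_const_mul c hg
      _ ≤ c * ∫⁻ x in S, g x ∂ρ := by gcongr; exact sdiff_subset
  calc ρ.withDensity f S ≤ ρ.withDensity f (S \ B ∪ B) := measure_mono (by simp)
    _ ≤ ρ.withDensity f (S \ B) + ρ.withDensity f B := measure_union_le _ _
    _ ≤ c * ρ.withDensity g S + ρ.withDensity f B := by gcongr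

theorem gaussianPDFReal_eq_exp_mul (a a' : ℝ) (v : ℝ≥0) (x : ℝ) :
    gaussianPDFReal a v x
      = exp ((a - a') * (2 * x - a - a') / (2 * v)) * gaussianPDFReal a' v x := by
  simp only [gaussianPDFReal]
  rw [mul_left_comm, ← exp_add]
  congr 2
  ring

theorem gaussianReal_preimage_neg (μ : ℝ) (v : ℝ≥0) (S : Set ℝ) :
    gaussianReal (-μ) v (Neg.neg ⁻¹' S) = gaussianReal μ v S := by
  rw [← gaussianReal_map_neg, show (fun x : ℝ ↦ -x) = MeasurableEquiv.neg ℝ from rfl,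
    MeasurableEquiv.map_apply]
  simp

theorem gaussianReal_Ioi_le_half (μ : ℝ) (v : ℝ≥0) : gaussianReal μ v (Ioi μ) ≤ 1 / 2 := by
  have hsymm : gaussianReal μ v (Ioi μ) = gaussianReal μ v (Iio μ) := by
    have hreflect := gaussianReal_map_const_sub (μ := μ) (v := v) (2 * μ)
    rw [show 2 * μ - μ = μ by ring] at hreflect
    conv_lhs => rw [← hreflect, Measure.map_apply (by fun_prop) measurableSet_Ioi]
    congr 1
    ext x
    simp only [mem_preimage, mem_Ioi, mem_Iio]
    constructor <;> intro <;> linarith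
  have hsum : gaussianReal μ v (Ioi μ) + gaussianReal μ v (Iio μ) ≤ 1 := by
    rw [← measure_union (Iio_disjoint_Ioi_of_le le_rfl).symm measurableSet_Iio]
    exact prob_le_one
  rw [ENNReal.le_div_iff_mul_le (by simp) (by simp), mul_two]
  simpa only [← hsymm] using hsum

theorem gaussianReal_Ioi_add_le_of_nonneg {v : ℝ≥0} (hv : v ≠ 0) (m : ℝ) {s : ℝ} (hs : 0 ≤ s) :
    gaussianReal m v (Ioi (m + s)) ≤ ENNReal.ofReal (exp (-s ^ 2 / (2 * v)) / 2) := by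
  set c := ENNReal.ofReal (exp (-s ^ 2 / (2 * v)))
  have hpdf : ∀ x ∈ Ioi (m + s), gaussianPDF m v x ≤ c * gaussianPDF (m + s) v x := by
    intro x hx
    rw [gaussianPDF, gaussianPDF, ← ENNReal.ofReal_mul (exp_nonneg _),
      gaussianPDFReal_eq_exp_mul m (m + s)]
    gcongr
    · exact gaussianPDFReal_nonneg _ _ _
    · nlinarith [mem_Ioi.mp hx]
  calc gaussianReal m v (Ioi (m + s))
      ≤ ∫⁻ x in Ioi (m + s), c * gaussianPDF (m + s) v x := by
        rw [gaussianReal_apply m hv]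
        exact setLIntegral_mono ((measurable_gaussianPDF _ _).const_mul c) hpdf
    _ = c * gaussianReal (m + s) v (Ioi (m + s)) := by
        rw [lintegral_const_mul c (measurable_gaussianPDF _ _), gaussianReal_apply _ hv]
    _ ≤ c * (1 / 2) := by gcongr; exact gaussianReal_Ioi_le_half _ _
    _ = ENNReal.ofReal (exp (-s ^ 2 / (2 * v)) / 2) := by
        rw [ENNReal.ofReal_div_of_pos two_pos, ENNReal.ofReal_ofNat, mul_one_div]

theorem gaussianPDF_le_ofReal_inv_sqrt (m : ℝ) (v : ℝ≥0) (x : ℝ) :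
    gaussianPDF m v x ≤ ENNReal.ofReal (√(2 * π * v))⁻¹ := by
  refine ENNReal.ofReal_le_ofReal (mul_le_of_le_one_right (by positivity) ?_)
  rw [exp_le_one_iff, neg_div, neg_nonpos]
  positivity

theorem gaussianReal_Ioi_add_le_of_nonpos {v : ℝ≥0} (hv : v ≠ 0) (m : ℝ) {s : ℝ} (hs : s ≤ 0) :
    gaussianReal m v (Ioi (m + s)) ≤ ENNReal.ofReal (1 / 2 + -s / √(2 * π * v)) := by
  have hcentre : gaussianReal m v (Ioc (m + s) m) ≤ ENNReal.ofReal (-s / √(2 * π * v)) :=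
    calc gaussianReal m v (Ioc (m + s) m)
        ≤ ∫⁻ _ in Ioc (m + s) m, ENNReal.ofReal (√(2 * π * v))⁻¹ := by
          rw [gaussianReal_apply m hv]
          exact setLIntegral_mono measurable_const fun x _ ↦ gaussianPDF_le_ofReal_inv_sqrt m v x
      _ = ENNReal.ofReal (-s / √(2 * π * v)) := by
          rw [setLIntegral_const, Real.volume_Ioc, ← ENNReal.ofReal_mul (by positivity)]
          congr 1
          ring
  calc gaussianReal m v (Ioi (m + s))
      ≤ gaussianReal m v (Ioc (m + s) m ∪ Ioi m) := measure_mono Ioi_subset_Ioc_union_Ioi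
    _ ≤ gaussianReal m v (Ioc (m + s) m) + gaussianReal m v (Ioi m) := measure_union_le _ _
    _ ≤ ENNReal.ofReal (-s / √(2 * π * v)) + 1 / 2 :=
        add_le_add hcentre (gaussianReal_Ioi_le_half _ _)
    _ = ENNReal.ofReal (1 / 2 + -s / √(2 * π * v)) := by
        rw [add_comm, ENNReal.ofReal_add (by norm_num) (div_nonneg (by linarith) (sqrt_nonneg _)),
          ENNReal.ofReal_div_of_pos two_pos]
        simp

theorem setOf_exp_mul_gaussianPDF_lt_subset_Ioi {ε Δ a a' : ℝ} (hε : 0 ≤ ε) (hΔ : 0 < Δ)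
    (ha' : a' ≤ a) (ha : a - a' ≤ Δ) {v : ℝ≥0} (hv : v ≠ 0) :
    {x | ENNReal.ofReal (exp ε) * gaussianPDF a' v x < gaussianPDF a v x}
      ⊆ Ioi (a + (ε * v / Δ - Δ / 2)) := by
  intro x hx
  have hvpos : (0 : ℝ) < v := by positivity
  rw [mem_ofPred_eq, gaussianPDF, gaussianPDF, ← ENNReal.ofReal_mul (exp_nonneg _),
    ENNReal.ofReal_lt_ofReal_iff (gaussianPDFReal_pos _ _ _ hv), gaussianPDFReal_eq_exp_mul a a',
    mul_lt_mul_iff_left₀ (gaussianPDFReal_pos _ _ _ hv), exp_lt_exp, lt_div_iff₀ (by positivity)]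
    at hx
  have hpos : 0 < 2 * (x - a) + (a - a') :=
    pos_of_mul_pos_right (by nlinarith [mul_nonneg hε hvpos.le]) (sub_nonneg.mpr ha')
  rw [mem_Ioi, ← lt_sub_iff_add_lt', sub_lt_iff_lt_add, div_lt_iff₀ hΔ]
  nlinarith [mul_nonneg (sub_nonneg.mpr ha) hpos.le]

theorem half_exp_neg_threshold_sq_le {ε L Δ v : ℝ} (hε0 : 0 < ε) (hε1 : ε ≤ 1) (hL : 0 < L)
    (hΔ : 0 < Δ) (hv : v = 2 * L * Δ ^ 2 / ε ^ 2) :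
    exp (-(ε * v / Δ - Δ / 2) ^ 2 / (2 * v)) / 2 ≤ 5 / 4 * exp (-L) := by
  have hexponent : (ε * v / Δ - Δ / 2) ^ 2 / (2 * v) = L - ε / 2 + ε ^ 2 / (16 * L) := by
    rw [hv]; field_simp; ring
  have hexp_half : exp (1 / 2) ≤ 5 / 2 := by
    have := exp_bound_div_one_sub_of_interval' (x := 1 / 2) (by norm_num) (by norm_num)
    norm_num at this
    linarith
  calc exp (-(ε * v / Δ - Δ / 2) ^ 2 / (2 * v)) / 2 ≤ exp (1 / 2) * exp (-L) / 2 := by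
        rw [← exp_add, neg_div, hexponent]
        gcongr
        linarith [show 0 ≤ ε ^ 2 / (16 * L) by positivity]
    _ ≤ 5 / 4 * exp (-L) := by nlinarith [exp_pos (-L)]

theorem half_add_neg_threshold_div_le {ε L Δ v : ℝ} (hε0 : 0 < ε) (hε1 : ε ≤ 1) (hL : 1 / 5 ≤ L)
    (hΔ : 0 < Δ) (hv : v = 2 * L * Δ ^ 2 / ε ^ 2) (ht : ε * v / Δ - Δ / 2 < 0) :
    1 / 2 + -(ε * v / Δ - Δ / 2) / √(2 * π * v) ≤ 5 / 4 * exp (-L) := by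
  have hL4 : L < 1 / 4 := by
    by_contra! h
    have : ε * v / Δ - Δ / 2 = (4 * L - ε) * Δ / (2 * ε) := by rw [hv]; field_simp; ring
    have : 0 ≤ (4 * L - ε) * Δ / (2 * ε) :=
      div_nonneg (mul_nonneg (by linarith) hΔ.le) (by positivity)
    linarith
  have h34 : 3 / 4 < exp (-(1 / 4)) := by
    linarith [add_one_lt_exp (show (-(1 / 4) : ℝ) ≠ 0 by norm_num)]
  have hexp : exp (-(1 / 4)) ≤ exp (-L) := exp_le_exp.mpr (by linarith)
  have hnum : -(ε * v / Δ - Δ / 2) ≤ Δ / 2 := by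
    have : 0 ≤ v := by rw [hv]; positivity
    linarith [show 0 ≤ ε * v / Δ by positivity]
  have hden : 3 / 2 * Δ ≤ √(2 * π * v) := by
    rw [show 3 / 2 * Δ = √((3 / 2 * Δ) ^ 2) from (sqrt_sq (by positivity)).symm]
    refine sqrt_le_sqrt ?_
    have : 4 * L * Δ ^ 2 ≤ 2 * v := by
      rw [hv, show 2 * (2 * L * Δ ^ 2 / ε ^ 2) = 4 * L * Δ ^ 2 / ε ^ 2 by ring,
        le_div_iff₀ (by positivity)]
      have : ε ^ 2 ≤ 1 := by nlinarith
      nlinarith [show 0 ≤ 4 * L * Δ ^ 2 by positivity]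
    nlinarith [mul_le_mul_of_nonneg_left this pi_pos.le, sq_nonneg Δ,
      mul_nonneg (sub_nonneg.mpr pi_gt_three.le) (show 0 ≤ L * Δ ^ 2 by positivity),
      mul_nonneg (sub_nonneg.mpr hL) (sq_nonneg Δ)]
  calc 1 / 2 + -(ε * v / Δ - Δ / 2) / √(2 * π * v) ≤ 1 / 2 + (Δ / 2) / (3 / 2 * Δ) := by
        gcongr
    _ ≤ 5 / 4 * exp (-L) := by rw [show Δ / 2 / (3 / 2 * Δ) = 1 / 3 by field_simp]; linarith

theorem gaussianReal_Ioi_add_threshold_le (m : ℝ) {ε δ Δ : ℝ} (hε : ε ∈ Ioo (0 : ℝ) 1)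
    (hδ : δ ∈ Ioo (0 : ℝ) 1) (hΔ : 0 < Δ) {σ2 : ℝ≥0}
    (hσ2 : (σ2 : ℝ) = 2 * log (1.25 / δ) * Δ ^ 2 / ε ^ 2) :
    gaussianReal m σ2 (Ioi (m + (ε * σ2 / Δ - Δ / 2))) ≤ ENNReal.ofReal δ := by
  obtain ⟨hε0, hε1⟩ := hε
  obtain ⟨hδ0, hδ1⟩ := hδ
  set L := log (1.25 / δ)
  have hδL : δ = 5 / 4 * exp (-L) := by
    rw [exp_neg, exp_log (by positivity)]
    field_simp
    norm_num
  have hL : 1 / 5 ≤ L := by linarith [add_one_le_exp (-L)]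
  have hv : σ2 ≠ 0 := by
    rw [← NNReal.coe_ne_zero, hσ2]
    positivity
  rw [hδL]
  rcases le_or_gt 0 (ε * σ2 / Δ - Δ / 2) with ht | ht
  · exact (gaussianReal_Ioi_add_le_of_nonneg hv m ht).trans <| ENNReal.ofReal_le_ofReal <|
      half_exp_neg_threshold_sq_le hε0 hε1.le (by linarith) hΔ hσ2
  · exact (gaussianReal_Ioi_add_le_of_nonpos hv m ht.le).trans <| ENNReal.ofReal_le_ofReal <|
      half_add_neg_threshold_div_le hε0 hε1.le hL hΔ hσ2 ht

theorem gaussianReal_le_exp_mul_add_of_le {ε δ Δ a a' : ℝ} (hε : ε ∈ Ioo (0 : ℝ) 1)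
    (hδ : δ ∈ Ioo (0 : ℝ) 1) (hΔ : 0 < Δ) (ha' : a' ≤ a) (ha : a - a' ≤ Δ) {σ2 : ℝ≥0}
    (hσ2 : (σ2 : ℝ) = 2 * log (1.25 / δ) * Δ ^ 2 / ε ^ 2) (S : Set ℝ) :
    gaussianReal a σ2 S ≤ ENNReal.ofReal (exp ε) * gaussianReal a' σ2 S + ENNReal.ofReal δ := by
  have hv : σ2 ≠ 0 := by
    have hL : 0 < log (1.25 / δ) := log_pos (by rw [one_lt_div hδ.1]; linarith [hδ.2])
    have := hε.1
    rw [← NNReal.coe_ne_zero, hσ2]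
    positivity
  simp only [gaussianReal_of_var_ne_zero _ hv]
  refine (withDensity_le_mul_withDensity_add _ (measurable_gaussianPDF a' σ2)
    (ENNReal.ofReal (exp ε)) S).trans ?_
  gcongr
  rw [← gaussianReal_of_var_ne_zero _ hv]
  exact (measure_mono (setOf_exp_mul_gaussianPDF_lt_subset_Ioi hε.1.le hΔ ha' ha hv)).trans
    (gaussianReal_Ioi_add_threshold_le a hε hδ hΔ hσ2)

theorem gaussian_mechanism_one_dim_general
    (ε δ Δ a a' : ℝ)
    (hε : ε ∈ Set.Ioo (0 : ℝ) 1) (hδ : δ ∈ Set.Ioo (0 : ℝ) 1)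
    (hΔ : 0 < Δ) (ha : |a - a'| ≤ Δ)
    (σ2 : NNReal) (hσ2 : (σ2 : ℝ) = 2 * Real.log (1.25 / δ) * Δ ^ 2 / ε ^ 2)
    (S : Set ℝ) :
    gaussianReal a σ2 S ≤ ENNReal.ofReal (Real.exp ε) * gaussianReal a' σ2 S
      + ENNReal.ofReal δ := by
  rcases le_total a' a with ha' | ha'
  · exact gaussianReal_le_exp_mul_add_of_le hε hδ hΔ ha' ((le_abs_self _).trans ha) hσ2 S
  · have hneg := gaussianReal_le_exp_mul_add_of_le hε hδ hΔ (neg_le_neg ha')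
      (by linarith [neg_abs_le (a - a')]) hσ2 (Neg.neg ⁻¹' S)
    simpa only [gaussianReal_preimage_neg] using hneg

/-- The one-dimensional Gaussian mechanism: for `|a - a'| ≤ Δ` and
`σ² = 2 ln(1.25/δ) Δ² / ε²`, the Gaussian measures with means `a`, `a'` and variance `σ²`
are `(ε, δ)`-indistinguishable. -/
theorem gaussian_mechanism_one_dim
    (ε δ Δ a a' : ℝ)
    (hε : ε ∈ Set.Ioo (0 : ℝ) 1) (hδ : δ ∈ Set.Ioo (0 : ℝ) 1)
    (hΔ : 0 < Δ) (ha : |a - a'| ≤ Δ)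
    (σ2 : NNReal) (hσ2 : (σ2 : ℝ) = 2 * Real.log (1.25 / δ) * Δ ^ 2 / ε ^ 2)
    (S : Set ℝ) (hS : MeasurableSet S) :
    gaussianReal a σ2 S ≤ ENNReal.ofReal (Real.exp ε) * gaussianReal a' σ2 S
      + ENNReal.ofReal δ :=
  gaussian_mechanism_one_dim_general ε δ Δ a a' hε hδ hΔ ha σ2 hσ2 S
end

section
/- Let d ≥ 1, ε ∈ (0,1), δ ∈ (0,1), Δ > 0, and let a, a' ∈ ℝ^d (with the Euclidean norm) satisfy ‖a − a'‖₂ ≤ Δ. Set σ² = 2·ln(1.25/δ)·Δ²/ε², and let γ_x denote the probability measure on ℝ^d obtained as the product over coordinates i of gaussianReal x_i σ² (the isotropic Gaussian with mean x and per-coordinate variance σ²). Then γ_a and γ_{a'} are (ε, δ)-indistinguishable: for every measurable set S ⊆ ℝ^d, γ_a(S) ≤ exp(ε)·γ_{a'}(S) + δ. (This is the d-dimensional Gaussian mechanism with L₂ sensitivity Δ.) -/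
/-!
The log-likelihood ratio `ℓ` of `γ a` against `γ a'` is affine in `x`, so `γ a` has density `exp ℓ`
with respect to `γ a'`, and under `γ a` it is a one-dimensional Gaussian `N(η/2, η)` with
`η = ‖a - a'‖² / σ² ≤ ε² / (2 log (1.25/δ))`. Splitting `S` along `{ℓ ≤ ε}` gives
`γ a S ≤ exp ε * γ a' S + γ a {ℓ > ε}`, and the last term is the standard Gaussian tail at
`t = (ε - η/2) / √η`. If `t ≥ 0`, then `t² ≥ 2 log (1.25/δ) - 1` and `P(Z > t) ≤ exp (-t²/2) / 2`
give at most `δ`. If `t < 0`, then `log (1.25/δ) < 1/4`, so `δ > 15/16`, while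
`P(Z > t) ≤ 1/2 + |t| / √(2π) ≤ 5/6`.
-/

open MeasureTheory ProbabilityTheory Real Set
open scoped NNReal ENNReal

theorem MeasureTheory.Measure.pi_withDensity {ι : Type*} [Fintype ι] {X : ι → Type*}
    [∀ i, MeasurableSpace (X i)] (μ : ∀ i, Measure (X i)) [∀ i, IsProbabilityMeasure (μ i)]
    {f : ∀ i, X i → ℝ≥0∞} (hf : ∀ i, Measurable (f i))
    [∀ i, SigmaFinite ((μ i).withDensity (f i))] :
    Measure.pi (fun i => (μ i).withDensity (f i))
      = (Measure.pi μ).withDensity fun x => ∏ i, f i (x i) := by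
  refine Measure.pi_eq fun s hs => ?_
  have hind : (univ.pi s).indicator (fun x => ∏ i, f i (x i))
      = fun x => ∏ i, (s i).indicator (f i) (x i) := by
    ext x
    by_cases hx : x ∈ univ.pi s
    · rw [indicator_of_mem hx]
      exact Finset.prod_congr rfl fun i _ => (indicator_of_mem (hx i (mem_univ i)) _).symm
    · obtain ⟨i, -, hi⟩ := not_forall₂.1 hx
      rw [indicator_of_notMem hx,
        Finset.prod_eq_zero (Finset.mem_univ i) (indicator_of_notMem hi _)]
  rw [withDensity_apply _ (MeasurableSet.univ_pi hs),
    ← lintegral_indicator (MeasurableSet.univ_pi hs), hind,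
    lintegral_prod_eq_prod_lintegral_of_indepFun _ _
      (iIndepFun_pi fun i => ((hf i).indicator (hs i)).aemeasurable)
      fun i => ((hf i).indicator (hs i)).comp (measurable_pi_apply i)]
  refine Finset.prod_congr rfl fun i _ => ?_
  rw [withDensity_apply _ (hs i), ← lintegral_indicator (hs i),
    ← (measurePreserving_eval μ i).lintegral_comp ((hf i).indicator (hs i))]

theorem MeasureTheory.measure_le_exp_mul_add_of_withDensity_exp {α : Type*}
    [MeasurableSpace α] {μ ν : Measure α} {ℓ : α → ℝ} (hℓ : Measurable ℓ)
    (hμ : μ = ν.withDensity fun x => ENNReal.ofReal (exp (ℓ x))) (ε : ℝ) {S : Set α}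
    (hS : MeasurableSet S) :
    μ S ≤ ENNReal.ofReal (exp ε) * ν S + μ {x | ε < ℓ x} := by
  set G := {x | ℓ x ≤ ε}
  have hG : MeasurableSet G := measurableSet_le hℓ measurable_const
  have hSG : μ (S ∩ G) ≤ ENNReal.ofReal (exp ε) * ν S := by
    calc μ (S ∩ G) = ∫⁻ x in S ∩ G, ENNReal.ofReal (exp (ℓ x)) ∂ν := by
          rw [hμ, withDensity_apply _ (hS.inter hG)]
      _ ≤ ∫⁻ _ in S ∩ G, ENNReal.ofReal (exp ε) ∂ν :=
          setLIntegral_mono measurable_const fun x hx => by gcongr; exact hx.2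
      _ ≤ ENNReal.ofReal (exp ε) * ν S := by
          rw [setLIntegral_const]; gcongr; exact inter_subset_left
  calc μ S ≤ μ (S ∩ G) + μ (S \ G) := measure_le_inter_add_sdiff μ S G
    _ ≤ ENNReal.ofReal (exp ε) * ν S + μ {x | ε < ℓ x} :=
        add_le_add hSG (measure_mono fun x hx => show ε < ℓ x from not_le.1 hx.2)

namespace ProbabilityTheory

lemma gaussianReal_Ioi_zero_le_half (v : ℝ≥0) : gaussianReal 0 v (Ioi 0) ≤ 2⁻¹ := by
  have hsymm : gaussianReal 0 v (Iio 0) = gaussianReal 0 v (Ioi 0) := by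
    conv_rhs => rw [← neg_zero, ← gaussianReal_map_neg,
      Measure.map_apply measurable_neg measurableSet_Ioi]
    simp
  have hsum : gaussianReal 0 v (Ioi 0) + gaussianReal 0 v (Iio 0) ≤ 1 := by
    rw [← measure_union Ioi_disjoint_Iio_same measurableSet_Iio]
    exact prob_le_one
  rw [hsymm, ← two_mul] at hsum
  rwa [ENNReal.le_inv_iff_mul_le, mul_comm]

lemma gaussianReal_le_ofReal_mul_volume (m : ℝ) {v : ℝ≥0} (hv : v ≠ 0) (s : Set ℝ) :
    gaussianReal m v s ≤ ENNReal.ofReal (√(2 * π * v))⁻¹ * volume s := by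
  rw [gaussianReal_of_var_ne_zero m hv, ← smul_eq_mul, ← Measure.smul_apply,
    ← withDensity_const]
  refine withDensity_mono (ae_of_all _ fun x => ENNReal.ofReal_le_ofReal ?_) s
  rw [gaussianPDFReal]
  refine mul_le_of_le_one_right (by positivity) (exp_le_one_iff.2 ?_)
  exact div_nonpos_of_nonpos_of_nonneg (neg_nonpos.2 (sq_nonneg _)) (by positivity)

lemma gaussianReal_Ioi_le_exp {v : ℝ≥0} (hv : v ≠ 0) {t : ℝ} (ht : 0 ≤ t) :
    gaussianReal 0 v (Ioi t) ≤ ENNReal.ofReal (exp (-t ^ 2 / (2 * v)) / 2) := by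
  have hshift : gaussianReal 0 v (Ioi t) = gaussianReal (-t) v (Ioi 0) := by
    rw [← zero_sub, ← gaussianReal_map_sub_const,
      Measure.map_apply (measurable_sub_const t) measurableSet_Ioi]
    simp
  have hpdf : ∀ y ∈ Ioi (0 : ℝ),
      gaussianPDF (-t) v y ≤ ENNReal.ofReal (exp (-t ^ 2 / (2 * v))) * gaussianPDF 0 v y := by
    intro y hy
    rw [gaussianPDF, gaussianPDF, ← ENNReal.ofReal_mul (exp_nonneg _)]
    refine ENNReal.ofReal_le_ofReal ?_
    rw [gaussianPDFReal, gaussianPDFReal, mul_left_comm, ← exp_add]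
    gcongr
    rw [← add_div]
    gcongr
    nlinarith [mul_nonneg (le_of_lt hy) ht]
  calc gaussianReal 0 v (Ioi t) = ∫⁻ y in Ioi 0, gaussianPDF (-t) v y := by
        rw [hshift, gaussianReal_apply _ hv]
    _ ≤ ∫⁻ y in Ioi 0, ENNReal.ofReal (exp (-t ^ 2 / (2 * v))) * gaussianPDF 0 v y :=
        setLIntegral_mono (by fun_prop) hpdf
    _ = ENNReal.ofReal (exp (-t ^ 2 / (2 * v))) * gaussianReal 0 v (Ioi 0) := by
        rw [lintegral_const_mul _ (measurable_gaussianPDF 0 v), gaussianReal_apply _ hv]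
    _ ≤ ENNReal.ofReal (exp (-t ^ 2 / (2 * v))) * ENNReal.ofReal 2⁻¹ := by
        rw [ENNReal.ofReal_inv_of_pos two_pos, ENNReal.ofReal_ofNat]
        gcongr
        exact gaussianReal_Ioi_zero_le_half v
    _ = ENNReal.ofReal (exp (-t ^ 2 / (2 * v)) / 2) := by
        rw [← ENNReal.ofReal_mul (exp_nonneg _), ← div_eq_mul_inv]

lemma gaussianReal_Ioi_le_mul_add_half {v : ℝ≥0} (hv : v ≠ 0) {t : ℝ} (ht : t ≤ 0) :
    gaussianReal 0 v (Ioi t) ≤ ENNReal.ofReal ((√(2 * π * v))⁻¹ * -t + 2⁻¹) := by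
  calc gaussianReal 0 v (Ioi t) ≤ gaussianReal 0 v (Ioc t 0) + gaussianReal 0 v (Ioi 0) := by
        rw [← Ioc_union_Ioi_eq_Ioi ht]; exact measure_union_le _ _
    _ ≤ ENNReal.ofReal (√(2 * π * v))⁻¹ * ENNReal.ofReal (-t) + ENNReal.ofReal 2⁻¹ := by
        gcongr
        · simpa using gaussianReal_le_ofReal_mul_volume 0 hv (Ioc t 0)
        · rw [ENNReal.ofReal_inv_of_pos two_pos, ENNReal.ofReal_ofNat]
          exact gaussianReal_Ioi_zero_le_half v
    _ = ENNReal.ofReal ((√(2 * π * v))⁻¹ * -t + 2⁻¹) := by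
        rw [← ENNReal.ofReal_mul (by positivity), ← ENNReal.ofReal_add
          (mul_nonneg (by positivity) (by linarith)) (by norm_num)]

lemma gaussianReal_Ioi_eq_zero_one (m : ℝ) {v : ℝ≥0} (hv : v ≠ 0) (x : ℝ) :
    gaussianReal m v (Ioi x) = gaussianReal 0 1 (Ioi ((x - m) / √v)) := by
  have hs : 0 < √(v : ℝ) := Real.sqrt_pos.2 (by positivity)
  have hmap : gaussianReal m v = ((gaussianReal 0 1).map (√(v : ℝ) * ·)).map (· + m) := by
    rw [gaussianReal_map_const_mul, gaussianReal_map_add_const]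
    congr
    · simp
    · ext; simp [Real.sq_sqrt v.coe_nonneg]
  rw [hmap, Measure.map_apply (measurable_add_const m) measurableSet_Ioi,
    Measure.map_apply (measurable_const_mul _)
      (measurableSet_Ioi.preimage (measurable_add_const m))]
  congr 1
  ext z
  simp [div_lt_iff₀' hs, sub_lt_iff_lt_add]

lemma gaussianReal_zero_one_Ioi_le_of_sub_one_le_sq {t L : ℝ} (ht : 0 ≤ t)
    (htL : 2 * L - 1 ≤ t ^ 2) : gaussianReal 0 1 (Ioi t) ≤ ENNReal.ofReal (1.25 * exp (-L)) := by
  refine (gaussianReal_Ioi_le_exp one_ne_zero ht).trans (ENNReal.ofReal_le_ofReal ?_)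
  have hexp : exp (1 / 2) ≤ 2 := by
    have := exp_bound_div_one_sub_of_interval (x := 1 / 2) (by norm_num) (by norm_num)
    norm_num at this ⊢
    exact this
  calc exp (-t ^ 2 / (2 * (1 : ℝ≥0))) / 2 ≤ exp (1 / 2) * exp (-L) / 2 := by
        rw [← exp_add]; gcongr; push_cast; linarith
    _ ≤ 1.25 * exp (-L) := by nlinarith [exp_pos (-L)]

lemma gaussianReal_zero_one_Ioi_le_five_sixths {t : ℝ} (ht : -(4 / 5) ≤ t) (ht0 : t ≤ 0) :
    gaussianReal 0 1 (Ioi t) ≤ ENNReal.ofReal (5 / 6) := by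
  refine (gaussianReal_Ioi_le_mul_add_half one_ne_zero ht0).trans (ENNReal.ofReal_le_ofReal ?_)
  have hpi : 12 / 5 ≤ √(2 * π) := by
    rw [Real.le_sqrt' (by norm_num)]; nlinarith [pi_gt_three]
  have : (√(2 * π))⁻¹ * -t ≤ 1 / 3 := by
    rw [inv_mul_le_iff₀ (by positivity)]; nlinarith
  push_cast
  rw [mul_one]
  linarith

lemma gaussianReal_half_Ioi_le_of_mul_log_le {ε δ : ℝ} (hε : 0 < ε) (hε1 : ε ≤ 1) (hδ : 0 < δ)
    (hδ1 : δ ≤ 1) {η : ℝ} (hη0 : 0 ≤ η) (hη : η * (2 * log (1.25 / δ)) ≤ ε ^ 2) :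
    gaussianReal (η / 2) η.toNNReal (Ioi ε) ≤ ENNReal.ofReal δ := by
  rcases hη0.eq_or_lt with rfl | hηpos
  · simp [gaussianReal_zero_var, Set.indicator, not_lt.2 hε.le]
  set L := log (1.25 / δ)
  have hδL : δ = 1.25 * exp (-L) := by
    rw [exp_neg, exp_log (by positivity)]
    field_simp
  have hL : 0.2 ≤ L := by
    have hlog := one_sub_inv_le_log_of_pos (by positivity : (0 : ℝ) < 1.25 / δ)
    have : δ / 1.25 ≤ 0.8 := by rw [div_le_iff₀ (by norm_num)]; linarith
    rw [inv_div] at hlog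
    exact le_trans (by linarith) hlog
  set s := √η
  have hs : 0 < s := Real.sqrt_pos.2 hηpos
  have hs2 : s ^ 2 = η := Real.sq_sqrt hη0
  rw [gaussianReal_Ioi_eq_zero_one _ (by simpa using hηpos), Real.coe_toNNReal _ hη0]
  set t := (ε - η / 2) / s
  have hts : t * s = ε - s ^ 2 / 2 := by rw [div_mul_cancel₀ _ hs.ne', hs2]
  rw [← hs2] at hη
  rcases le_or_gt 0 t with ht | ht
  · have htL : 2 * L - 1 ≤ t ^ 2 := by
      have : (2 * L - 1) * s ^ 2 ≤ t ^ 2 * s ^ 2 := by rw [← mul_pow, hts]; nlinarith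
      exact le_of_mul_le_mul_right this (pow_pos hs 2)
    rw [hδL]
    exact gaussianReal_zero_one_Ioi_le_of_sub_one_le_sq ht htL
  · have hL4 : L ≤ 1 / 4 := by nlinarith
    have hδ' : 15 / 16 ≤ δ := by rw [hδL]; nlinarith [add_one_le_exp (-L)]
    have hs2le : s ^ 2 ≤ 5 / 2 := by nlinarith
    have hts2 : -t < s / 2 := by
      by_contra h
      nlinarith
    exact (gaussianReal_zero_one_Ioi_le_five_sixths (by nlinarith) ht.le).trans
      (ENNReal.ofReal_le_ofReal (by linarith))

variable {ι : Type*} [Fintype ι]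

noncomputable def gaussianPrivacyLoss (a a' : ι → ℝ) (v : ℝ) (x : ι → ℝ) : ℝ :=
  (∑ i, (a i - a' i) * (x i - (a i + a' i) / 2)) / v

lemma measurable_gaussianPrivacyLoss (a a' : ι → ℝ) (v : ℝ) :
    Measurable (gaussianPrivacyLoss a a' v) := by
  unfold gaussianPrivacyLoss
  fun_prop

lemma gaussianReal_eq_withDensity_exp (m m' : ℝ) {v : ℝ≥0} (hv : v ≠ 0) :
    gaussianReal m v = (gaussianReal m' v).withDensity
      fun x => ENNReal.ofReal (exp ((m - m') * (x - (m + m') / 2) / v)) := by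
  rw [gaussianReal_of_var_ne_zero m' hv, ← withDensity_mul _ (measurable_gaussianPDF _ _)
    (by fun_prop), gaussianReal_of_var_ne_zero m hv]
  congr 1 with x
  rw [Pi.mul_apply, gaussianPDF, gaussianPDF,
    ← ENNReal.ofReal_mul (gaussianPDFReal_nonneg _ _ _)]
  congr 1
  rw [gaussianPDFReal, gaussianPDFReal, mul_assoc _ (rexp _), ← exp_add]
  congr 2
  have : (v : ℝ) ≠ 0 := by positivity
  field_simp
  ring

lemma pi_gaussianReal_eq_withDensity_exp (a a' : ι → ℝ) {v : ℝ≥0} (hv : v ≠ 0) :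
    Measure.pi (fun i => gaussianReal (a i) v)
      = (Measure.pi fun i => gaussianReal (a' i) v).withDensity
          fun x => ENNReal.ofReal (exp (gaussianPrivacyLoss a a' v x)) := by
  rw [funext fun i => gaussianReal_eq_withDensity_exp (a i) (a' i) hv,
    Measure.pi_withDensity _ fun i => by fun_prop]
  congr 1 with x
  rw [← ENNReal.ofReal_prod_of_nonneg fun i _ => exp_nonneg _, ← exp_sum, gaussianPrivacyLoss,
    Finset.sum_div]

lemma pi_gaussianReal_map_sum_mul (m : ι → ℝ) (v : ι → ℝ≥0) (c : ι → ℝ) :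
    (Measure.pi fun i => gaussianReal (m i) (v i)).map (fun x => ∑ i, c i * x i)
      = gaussianReal (∑ i, c i * m i) (∑ i, c i ^ 2 * v i).toNNReal := by
  set P := Measure.pi fun i => gaussianReal (m i) (v i)
  have hlaw : HasGaussianLaw (fun x => ∑ i, c i * x i) P := by
    refine iIndepFun.hasGaussianLaw_fun_sum (X := fun i (x : ι → ℝ) => c i * x i) (fun i => ?_)
      (iIndepFun_pi (X := fun i y => c i * y) fun i => by fun_prop)
    have : HasLaw (fun x : ι → ℝ => x i) (gaussianReal (m i) (v i)) P :=
      ⟨(measurable_pi_apply i).aemeasurable, (measurePreserving_eval _ i).map_eq⟩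
    exact this.hasGaussianLaw.map_fun (c i • ContinuousLinearMap.id ℝ ℝ)
  rw [hlaw.map_eq_gaussianReal]
  congr
  · rw [integral_finsetSum _ fun i _ => (integrable_eval IsGaussian.integrable_id).const_mul _]
    refine Finset.sum_congr rfl fun i _ => ?_
    rw [integral_const_mul, integral_eval, integral_id_gaussianReal]
  · have : (fun x : ι → ℝ => ∑ i, c i * x i) = ∑ i, fun x => c i * x i := by ext; simp
    rw [this, variance_sum_pi (X := fun i y => c i * y) fun i =>
      (memLp_id_gaussianReal 2).const_mul (c i)]
    refine Finset.sum_congr rfl fun i _ => ?_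
    rw [variance_const_mul]
    exact congrArg _ variance_id_gaussianReal

lemma pi_gaussianReal_map_gaussianPrivacyLoss (a a' : ι → ℝ) {v : ℝ≥0} (hv : v ≠ 0) :
    (Measure.pi fun i => gaussianReal (a i) v).map (gaussianPrivacyLoss a a' v)
      = gaussianReal ((∑ i, (a i - a' i) ^ 2 / v) / 2) (∑ i, (a i - a' i) ^ 2 / v).toNNReal := by
  have hv' : (v : ℝ) ≠ 0 := by positivity
  have hℓ : gaussianPrivacyLoss a a' v
      = (· - ∑ i, (a i - a' i) / v * ((a i + a' i) / 2))
        ∘ fun x => ∑ i, (a i - a' i) / v * x i := by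
    ext x
    simp only [gaussianPrivacyLoss, Function.comp_apply, Finset.sum_div,
      ← Finset.sum_sub_distrib]
    exact Finset.sum_congr rfl fun i _ => by field_simp
  rw [hℓ, ← Measure.map_map (by fun_prop) (by fun_prop), pi_gaussianReal_map_sum_mul,
    gaussianReal_map_sub_const]
  congr 2
  · rw [← Finset.sum_sub_distrib, Finset.sum_div]
    exact Finset.sum_congr rfl fun i _ => by field_simp; ring
  · exact Finset.sum_congr rfl fun i _ => by field_simp

end ProbabilityTheory

theorem gaussian_mechanism_multi_dim_general
    (d : ℕ)
    (ε δ Δ : ℝ)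
    (hε : ε ∈ Set.Ioo (0 : ℝ) 1) (hδ : δ ∈ Set.Ioo (0 : ℝ) 1) (hΔ : 0 < Δ)
    (a a' : EuclideanSpace ℝ (Fin d)) (ha : ‖a - a'‖ ≤ Δ)
    (σ2 : NNReal) (hσ2 : (σ2 : ℝ) = 2 * Real.log (1.25 / δ) * Δ ^ 2 / ε ^ 2)
    (γ : EuclideanSpace ℝ (Fin d) → Measure (EuclideanSpace ℝ (Fin d)))
    (hγ : ∀ x, γ x = (Measure.pi fun i => gaussianReal (x i) σ2).map
        (MeasurableEquiv.toLp 2 (Fin d → ℝ)))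
    (S : Set (EuclideanSpace ℝ (Fin d))) (hS : MeasurableSet S) :
    γ a S ≤ ENNReal.ofReal (Real.exp ε) * γ a' S + ENNReal.ofReal δ := by
  obtain ⟨hε0, hε1⟩ := hε
  obtain ⟨hδ0, hδ1⟩ := hδ
  have hL : 0 < log (1.25 / δ) := log_pos (by rw [lt_div_iff₀ hδ0]; linarith)
  have hσ2ne : σ2 ≠ 0 := by
    rw [← NNReal.coe_ne_zero, hσ2]
    positivity
  set η := ∑ i, (a i - a' i) ^ 2 / σ2
  have hη : η * (2 * log (1.25 / δ)) ≤ ε ^ 2 := by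
    have hnorm : η = ‖a - a'‖ ^ 2 / σ2 := by
      simp [η, EuclideanSpace.real_norm_sq_eq, Finset.sum_div]
    have hΔ2 : ‖a - a'‖ ^ 2 ≤ Δ ^ 2 := pow_le_pow_left₀ (norm_nonneg _) ha 2
    calc η * (2 * log (1.25 / δ)) = ‖a - a'‖ ^ 2 / Δ ^ 2 * ε ^ 2 := by
          rw [hnorm, hσ2]; field_simp
      _ ≤ ε ^ 2 := mul_le_of_le_one_left (by positivity) ((div_le_one (by positivity)).2 hΔ2)
  have hℓ := measurable_gaussianPrivacyLoss (ι := Fin d) a a' σ2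
  rw [hγ, hγ, MeasurableEquiv.map_apply, MeasurableEquiv.map_apply]
  refine (measure_le_exp_mul_add_of_withDensity_exp hℓ
    (pi_gaussianReal_eq_withDensity_exp _ _ hσ2ne) ε
    ((MeasurableEquiv.toLp 2 (Fin d → ℝ)).measurable hS)).trans (add_le_add_right ?_ _)
  rw [show {x | ε < gaussianPrivacyLoss a a' σ2 x} = gaussianPrivacyLoss a a' σ2 ⁻¹' Ioi ε
    from rfl, ← Measure.map_apply hℓ measurableSet_Ioi,
    pi_gaussianReal_map_gaussianPrivacyLoss _ _ hσ2ne]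
  exact gaussianReal_half_Ioi_le_of_mul_log_le hε0 hε1.le hδ0 hδ1.le (by positivity) hη

/-- The d-dimensional Gaussian mechanism with L₂ sensitivity Δ: for `‖a - a'‖₂ ≤ Δ` and
per-coordinate variance `σ² = 2 ln(1.25/δ) Δ² / ε²`, the isotropic Gaussians centered at
`a` and `a'` are `(ε, δ)`-indistinguishable. -/
theorem gaussian_mechanism_multi_dim
    (d : ℕ) (hd : 1 ≤ d)
    (ε δ Δ : ℝ)
    (hε : ε ∈ Set.Ioo (0 : ℝ) 1) (hδ : δ ∈ Set.Ioo (0 : ℝ) 1) (hΔ : 0 < Δ)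
    (a a' : EuclideanSpace ℝ (Fin d)) (ha : ‖a - a'‖ ≤ Δ)
    (σ2 : NNReal) (hσ2 : (σ2 : ℝ) = 2 * Real.log (1.25 / δ) * Δ ^ 2 / ε ^ 2)
    (γ : EuclideanSpace ℝ (Fin d) → Measure (EuclideanSpace ℝ (Fin d)))
    (hγ : ∀ x, γ x = (Measure.pi fun i => gaussianReal (x i) σ2).map
        (MeasurableEquiv.toLp 2 (Fin d → ℝ)))
    (S : Set (EuclideanSpace ℝ (Fin d))) (hS : MeasurableSet S) :
    γ a S ≤ ENNReal.ofReal (Real.exp ε) * γ a' S + ENNReal.ofReal δ :=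
  gaussian_mechanism_multi_dim_general d ε δ Δ hε hδ hΔ a a' ha σ2 hσ2 γ hγ S hS
end
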